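/- For all n ≥ 2, 49·j₃(n) = 43·K₃(n) + 8·K₃(n−1) + 36·K₃(n−2), where j₃ is the third-order Jacobsthal-Lucas sequence and K₃ is the Modified third-order Jacobsthal sequence. -/
import Mathlib


def j3 : ℕ → ℤ
  | 0 => 2
  | 1 => 1
  | 2 => 5
  | n + 3 => j3 (n + 2) + j3 (n + 1) + 2 * j3 n

def K3 : ℕ → ℤ
  | 0 => 3
  | 1 => 1
  | 2 => 3
  | n + 3 => K3 (n + 2) + K3 (n + 1) + 2 * K3 n

lemma aux15 : ∀ n : ℕ,
    49 * j3 (n + 2) = 43 * K3 (n + 2) + 8 * K3 (n + 1) + 36 * K3 n ∧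
    49 * j3 (n + 3) = 43 * K3 (n + 3) + 8 * K3 (n + 2) + 36 * K3 (n + 1) ∧
    49 * j3 (n + 4) = 43 * K3 (n + 4) + 8 * K3 (n + 3) + 36 * K3 (n + 2) := by
  intro n
  induction n with
  | zero => refine ⟨by simp [j3, K3], by simp [j3, K3], by simp [j3, K3]⟩
  | succ k ih =>
    obtain ⟨h1, h2, h3⟩ := ih
    refine ⟨h2, h3, ?_⟩
    have e1 : k + 1 + 4 = (k + 2) + 3 := rfl
    have e2 : k + 4 = (k + 1) + 3 := rfl
    rw [e1, show (k+2)+3 = k+5 from rfl, show k+5 = (k+2)+3 from rfl]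
    simp only [j3, K3] at *
    linarith

theorem stmt15 : ∀ n : ℕ, 2 ≤ n →
    49 * j3 n = 43 * K3 n + 8 * K3 (n - 1) + 36 * K3 (n - 2) := by
  intro n hn
  obtain ⟨m, rfl⟩ := Nat.exists_eq_add_of_le hn
  simpa [Nat.add_comm, Nat.add_sub_cancel] using (aux15 m).1
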